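/- arXiv:1110.1852 — 6 statements merged into one kernel-verified Lean document; each statement's English description precedes it below -/
import Mathlib

section
/- Let L/K be a finite Galois extension with abelian Galois group G. An element x ∈ L is normal in L/K (i.e., its Galois conjugates form a K-basis of L) if and only if for every character χ : G → ℂ× (equivalently, into K̄×), the sum ∑_{γ ∈ G} χ(γ⁻¹) x^γ is nonzero. -/
/-!
Let `Ω` be an algebraically closed extension of `L`, with `ι : L → Ω`, and `G = Gal(L/K)`. The
element `x` is normal iff no nonzero `K`-linear map `L → Ω` vanishes on all conjugates of `x`; such
maps form a subspace `W` of `Hom_K(L, Ω)` stable under `G` acting by precomposition. By Dedekind's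
lemma and `|G| = [L : K]` the embeddings `ι ∘ γ` form an `Ω`-basis of `Hom_K(L, Ω)`, so this is
the regular representation, whose `χ`-eigenvectors are the multiples of `e_χ = ∑ γ, χ γ • (ι ∘ γ)`.
As `G` is abelian, `W ≠ 0` iff it contains a common eigenvector, i.e. iff `e_χ ∈ W` for some `χ`,
i.e. iff `e_χ x = 0`, which is the vanishing of the character sum of `χ⁻¹`. Only eigenvectors are
used, never projections onto eigenspaces, so the characteristic may divide `|G|`.
-/

noncomputable section

/-- `x` is a normal element of `L/K`: its Galois conjugates form a `K`-basis of `L`. -/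
def IsNormalElement (K : Type*) {L : Type*} [Field K] [Field L] [Algebra K L] (x : L) : Prop :=
  Submodule.span K (Set.range fun γ : L ≃ₐ[K] L => γ x) = ⊤ ∧
    LinearIndependent K fun γ : L ≃ₐ[K] L => γ x

open Module Set

theorem Module.End.exists_mem_ne_zero_forall_eq_smul_of_commute {Ω V ι : Type*} [Field Ω]
    [IsAlgClosed Ω] [AddCommGroup V] [Module Ω V] [FiniteDimensional Ω V] [Finite ι]
    (T : ι → End Ω V) (hT : ∀ i j, Commute (T i) (T j)) (W : Submodule Ω V) (hW : W ≠ ⊥)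
    (hWT : ∀ i, MapsTo (T i) W W) : ∃ v ∈ W, v ≠ 0 ∧ ∀ i, ∃ c : Ω, T i v = c • v := by
  classical
  have := Fintype.ofFinite ι
  suffices ∀ s : Finset ι, ∀ W : Submodule Ω V, W ≠ ⊥ → (∀ i, MapsTo (T i) W W) →
      ∃ v ∈ W, v ≠ 0 ∧ ∀ i ∈ s, ∃ c : Ω, T i v = c • v by
    simpa using this Finset.univ W hW hWT
  intro s
  induction s using Finset.induction_on with
  | empty =>
    intro W hW _
    obtain ⟨v, hv, hv0⟩ := W.ne_bot_iff.1 hW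
    exact ⟨v, hv, hv0, by simp⟩
  | insert i s _ ih =>
    intro W hW hWT
    have : Nontrivial W := Submodule.nontrivial_iff_ne_bot.2 hW
    obtain ⟨c, hc⟩ := End.exists_eigenvalue ((T i).restrict (hWT i))
    obtain ⟨w, hw⟩ := hc.exists_hasEigenvector
    let E := W ⊓ (T i).eigenspace c
    have hE : E ≠ ⊥ := E.ne_bot_iff.2 ⟨w, ⟨w.2, (T i).eigenspace_restrict_le_eigenspace (hWT i) c
      ⟨w, hw.1, rfl⟩⟩, by simpa using hw.2⟩
    have hET : ∀ j, MapsTo (T j) E E := fun j =>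
      (hWT j).inter_inter (mapsTo_genEigenspace_of_comm (hT i j) c 1)
    obtain ⟨v, hv, hv0, hvs⟩ := ih E hE hET
    refine ⟨v, hv.1, hv0, fun j hj => ?_⟩
    rcases Finset.mem_insert.1 hj with rfl | hj
    · exact ⟨c, mem_eigenspace_iff.1 hv.2⟩
    · exact hvs j hj

theorem Representation.exists_monoidHom_forall_eq_smul {G Ω V : Type*} [Group G] [Field Ω]
    [AddCommGroup V] [Module Ω V] (ρ : Representation Ω G V) {v : V} (hv : v ≠ 0)
    (h : ∀ g, ∃ c : Ω, ρ g v = c • v) : ∃ χ : G →* Ωˣ, ∀ g, ρ g v = (χ g : Ω) • v := by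
  choose c hc using h
  have hinj : ∀ a b : Ω, a • v = b • v → a = b := fun _ _ h => smul_left_injective Ω hv h
  let χ : G →* Ω :=
    { toFun := c
      map_one' := hinj _ _ <| by rw [← hc, map_one, End.one_apply, one_smul]
      map_mul' := fun g g' => hinj _ _ <| by
        rw [← hc, map_mul, End.mul_apply, hc, map_smul, hc, smul_smul, mul_comm] }
  exact ⟨χ.toHomUnits, hc⟩

section Galois

variable {K L : Type*} [Field K] [Field L] [Algebra K L] (Ω : Type*) [Field Ω] [Algebra K Ω]

def precompRep : Representation Ω (L ≃ₐ[K] L) (L →ₗ[K] Ω) where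
  toFun γ :=
    { toFun := fun f => f ∘ₗ (γ⁻¹ : L ≃ₐ[K] L).toLinearMap
      map_add' := fun _ _ => rfl
      map_smul' := fun _ _ => rfl }
  map_one' := rfl
  map_mul' _ _ := by ext; simp

@[simp]
lemma precompRep_apply (γ : L ≃ₐ[K] L) (f : L →ₗ[K] Ω) (y : L) :
    precompRep Ω γ f y = f (γ⁻¹ y) := rfl

lemma card_algEquiv_eq_finrank_linearMap [FiniteDimensional K L] [IsGalois K L] :
    Fintype.card (L ≃ₐ[K] L) = finrank Ω (L →ₗ[K] Ω) := by
  rw [finrank_linearMap, finrank_self, mul_one, ← Nat.card_eq_fintype_card,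
    IsGalois.card_aut_eq_finrank]

variable [Algebra L Ω] [IsScalarTower K L Ω]

def galoisEmbedding (γ : L ≃ₐ[K] L) : L →ₗ[K] Ω :=
  ((IsScalarTower.toAlgHom K L Ω).comp γ.toAlgHom).toLinearMap

@[simp]
lemma galoisEmbedding_apply (γ : L ≃ₐ[K] L) (y : L) :
    galoisEmbedding Ω γ y = algebraMap L Ω (γ y) := rfl

lemma linearIndependent_galoisEmbedding :
    LinearIndependent Ω (galoisEmbedding (K := K) (L := L) Ω) :=
  (linearIndependent_toLinearMap K L Ω).comp _ fun _ _ h =>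
    AlgEquiv.ext fun y => (algebraMap L Ω).injective (DFunLike.congr_fun h y)

lemma precompRep_galoisEmbedding (γ δ : L ≃ₐ[K] L) :
    precompRep Ω γ (galoisEmbedding Ω δ) = galoisEmbedding Ω (δ * γ⁻¹) := rfl

variable [FiniteDimensional K L]

def characterEmbedding (χ : (L ≃ₐ[K] L) →* Ωˣ) : L →ₗ[K] Ω :=
  ∑ γ, (χ γ : Ω) • galoisEmbedding Ω γ

lemma characterEmbedding_apply (χ : (L ≃ₐ[K] L) →* Ωˣ) (y : L) :
    characterEmbedding Ω χ y = ∑ γ, (χ γ : Ω) * algebraMap L Ω (γ y) := by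
  simp [characterEmbedding]

lemma characterEmbedding_ne_zero (χ : (L ≃ₐ[K] L) →* Ωˣ) : characterEmbedding Ω χ ≠ 0 := by
  intro h
  simpa using Fintype.linearIndependent_iff.1 (linearIndependent_galoisEmbedding Ω) _ h 1

lemma precompRep_characterEmbedding (χ : (L ≃ₐ[K] L) →* Ωˣ) (γ : L ≃ₐ[K] L) :
    precompRep Ω γ (characterEmbedding Ω χ) = (χ γ : Ω) • characterEmbedding Ω χ := by
  simp only [characterEmbedding, map_sum, map_smul, precompRep_galoisEmbedding, Finset.smul_sum,
    smul_smul]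
  refine Fintype.sum_equiv (Equiv.mulRight γ⁻¹) _ _ fun δ => ?_
  simp [mul_left_comm _ (χ δ : Ω)]

variable [IsGalois K L]

def galoisEmbeddingBasis : Basis (L ≃ₐ[K] L) Ω (L →ₗ[K] Ω) :=
  basisOfLinearIndependentOfCardEqFinrank (linearIndependent_galoisEmbedding Ω)
    (card_algEquiv_eq_finrank_linearMap Ω)

@[simp]
lemma coe_galoisEmbeddingBasis :
    ⇑(galoisEmbeddingBasis (K := K) (L := L) Ω) = galoisEmbedding Ω :=
  coe_basisOfLinearIndependentOfCardEqFinrank _ _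

lemma eq_smul_characterEmbedding_of_precompRep_eq_smul (χ : (L ≃ₐ[K] L) →* Ωˣ)
    {f : L →ₗ[K] Ω} (hf : ∀ γ, precompRep Ω γ f = (χ γ : Ω) • f) :
    ∃ d : Ω, f = d • characterEmbedding Ω χ := by
  set B := galoisEmbeddingBasis (K := K) (L := L) Ω
  have hshift (γ : L ≃ₐ[K] L) : precompRep Ω γ f = ∑ δ, B.repr f (δ * γ) • B δ := by
    conv_lhs => rw [← B.sum_repr f]
    simp only [map_sum, map_smul, coe_galoisEmbeddingBasis, B, precompRep_galoisEmbedding]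
    exact Fintype.sum_equiv (Equiv.mulRight γ⁻¹) _ _ fun δ => by simp
  have hcoeff (γ : L ≃ₐ[K] L) : B.repr f γ = χ γ * B.repr f 1 := by
    have h := congr_arg (B.repr · 1) ((hshift γ).symm.trans (hf γ))
    simpa only [B.repr_sum_self, one_mul, map_smul, Finsupp.smul_apply, smul_eq_mul] using h
  refine ⟨B.repr f 1, ?_⟩
  calc f = ∑ γ, B.repr f γ • B γ := (B.sum_repr f).symm
    _ = B.repr f 1 • characterEmbedding Ω χ := by
      simp only [characterEmbedding, Finset.smul_sum, smul_smul, coe_galoisEmbeddingBasis, B]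
      exact Finset.sum_congr rfl fun γ _ => by rw [hcoeff γ, mul_comm]

end Galois

section Annihilator

variable (K : Type*) {L : Type*} [Field K] [Field L] [Algebra K L] (Ω : Type*) [Field Ω] [Algebra K Ω]

def conjugatesAnnihilator (x : L) : Submodule Ω (L →ₗ[K] Ω) where
  carrier := {f | ∀ γ : L ≃ₐ[K] L, f (γ x) = 0}
  add_mem' hf hg γ := by simp [hf γ, hg γ]
  zero_mem' _ := rfl
  smul_mem' c f hf γ := by simp [hf γ]

lemma mapsTo_precompRep_conjugatesAnnihilator (x : L) (γ : L ≃ₐ[K] L) :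
    MapsTo (precompRep Ω γ) (conjugatesAnnihilator K Ω x) (conjugatesAnnihilator K Ω x) :=
  fun _ hf δ => hf (γ⁻¹ * δ)

lemma isNormalElement_iff_span_eq_top [FiniteDimensional K L] [IsGalois K L] (x : L) :
    IsNormalElement K x ↔ Submodule.span K (range fun γ : L ≃ₐ[K] L => γ x) = ⊤ := by
  refine ⟨And.left, fun h => ⟨h, linearIndependent_of_top_le_span_of_card_eq_finrank h.ge ?_⟩⟩
  rw [← Nat.card_eq_fintype_card, IsGalois.card_aut_eq_finrank]

lemma isNormalElement_iff_conjugatesAnnihilator_eq_bot [FiniteDimensional K L] [IsGalois K L]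
    (x : L) : IsNormalElement K x ↔ conjugatesAnnihilator K Ω x = ⊥ := by
  rw [isNormalElement_iff_span_eq_top K]
  constructor
  · intro h
    exact (Submodule.eq_bot_iff _).2 fun f hf => LinearMap.ext_on_range h fun γ => hf γ
  · intro h
    by_contra hspan
    obtain ⟨φ, hφ0, hφ⟩ := Submodule.exists_le_ker_of_lt_top _ (lt_top_iff_ne_top.2 hspan)
    have hφW : Algebra.linearMap K Ω ∘ₗ φ ∈ conjugatesAnnihilator K Ω x := fun γ => by
      simp [LinearMap.mem_ker.1 (hφ (Submodule.subset_span ⟨γ, rfl⟩))]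
    rw [h, Submodule.mem_bot] at hφW
    exact hφ0 <| LinearMap.ext fun y =>
      (algebraMap K Ω).injective <| by simpa using LinearMap.congr_fun hφW y

variable [Algebra L Ω] [IsScalarTower K L Ω] [FiniteDimensional K L]

lemma characterEmbedding_mem_conjugatesAnnihilator_iff (χ : (L ≃ₐ[K] L) →* Ωˣ) (x : L) :
    characterEmbedding Ω χ ∈ conjugatesAnnihilator K Ω x ↔ characterEmbedding Ω χ x = 0 := by
  refine ⟨fun h => by simpa using h 1, fun h γ => ?_⟩
  rw [← inv_inv γ, ← precompRep_apply, precompRep_characterEmbedding]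
  simp [h]

lemma conjugatesAnnihilator_ne_bot_iff [IsAlgClosed Ω] [IsGalois K L]
    (hab : ∀ γ δ : L ≃ₐ[K] L, γ * δ = δ * γ) (x : L) :
    conjugatesAnnihilator K Ω x ≠ ⊥ ↔ ∃ χ : (L ≃ₐ[K] L) →* Ωˣ, characterEmbedding Ω χ x = 0 := by
  constructor
  · intro hW
    have hcomm (γ δ : L ≃ₐ[K] L) : Commute (precompRep Ω γ) (precompRep Ω δ) := by
      simp only [Commute, SemiconjBy, ← map_mul, hab]
    obtain ⟨f, hfW, hf0, hf⟩ := End.exists_mem_ne_zero_forall_eq_smul_of_commute _ hcomm _ hW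
      (mapsTo_precompRep_conjugatesAnnihilator K Ω x)
    obtain ⟨χ, hχ⟩ := (precompRep Ω).exists_monoidHom_forall_eq_smul hf0 hf
    obtain ⟨d, rfl⟩ := eq_smul_characterEmbedding_of_precompRep_eq_smul Ω χ hχ
    have hd : d ≠ 0 := by rintro rfl; simp at hf0
    exact ⟨χ, by simpa [hd] using hfW 1⟩
  · rintro ⟨χ, hχ⟩ h
    have := (characterEmbedding_mem_conjugatesAnnihilator_iff K Ω χ x).2 hχ
    rw [h, Submodule.mem_bot] at this
    exact characterEmbedding_ne_zero Ω χ this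

end Annihilator

theorem normal_iff_character_sums_ne_zero
    {K L : Type*} [Field K] [Field L] [Algebra K L]
    [FiniteDimensional K L] [IsGalois K L]
    (hab : ∀ γ δ : L ≃ₐ[K] L, γ * δ = δ * γ) (x : L) :
    IsNormalElement K x ↔
      ∀ χ : (L ≃ₐ[K] L) →* (AlgebraicClosure L)ˣ,
        ∑ γ : L ≃ₐ[K] L,
          (χ γ⁻¹ : AlgebraicClosure L) * algebraMap L (AlgebraicClosure L) (γ x) ≠ 0 := by
  rw [isNormalElement_iff_conjugatesAnnihilator_eq_bot K (AlgebraicClosure L), ← not_iff_not,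
    ← ne_eq, conjugatesAnnihilator_ne_bot_iff K _ hab, not_forall]
  refine (Equiv.inv _).exists_congr fun χ => ?_
  simp [characterEmbedding_apply]
end
end

section
/- Let L/K be a finite abelian extension of degree n ≥ 2 with Galois group G, and let |·| be an absolute value (valuation satisfying the triangle inequality) on L. Suppose x ∈ L satisfies |x^γ / x| < 1 for all γ ∈ G \ {Id}, and m is a positive integer with |x^γ / x|^m ≤ 1/n for all γ ∈ G \ {Id}. Then x^m is completely normal in L/K, i.e., for every intermediate field F of L/K, the conjugates of x^m under Gal(L/F) form an F-basis of L. -/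
/-!
Over an intermediate field `F`, every nontrivial conjugate of `y = x ^ m` has absolute value
at most `|y| / n`, and there are fewer than `n` of them, so `|y|` exceeds the sum of the
absolute values of the other conjugates. Shift a linear relation among the conjugates by a
Galois automorphism so that a coefficient of maximal size sits in front of `y`; the triangle
inequality then forces that coefficient, hence all of them, to vanish.
-/

noncomputable section

/-- `x` is completely normal in `L/K`: it is normal over every intermediate field. -/
def IsCompletelyNormal (K : Type*) {L : Type*} [Field K] [Field L] [Algebra K L] (x : L) : Prop :=
  ∀ F : IntermediateField K L, IsNormalElement F x

open Finset Module

section Conjugates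

variable {F L : Type*} [Field F] [Field L] [Algebra F L] [FiniteDimensional F L]

theorem sum_smul_conj_mul_left_eq_zero {c : (L ≃ₐ[F] L) → F} {y : L}
    (hc : ∑ σ, c σ • σ y = 0) (ρ : L ≃ₐ[F] L) : ∑ τ, c (ρ * τ) • τ y = 0 := by
  calc ∑ τ, c (ρ * τ) • τ y = ∑ σ, c σ • (ρ⁻¹ * σ) y :=
        Fintype.sum_equiv (Equiv.mulLeft ρ) _ _ fun τ => by simp
    _ = ρ⁻¹ (∑ σ, c σ • σ y) := by simp only [map_sum, map_smul, AlgEquiv.mul_apply]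
    _ = 0 := by rw [hc, map_zero]

theorem linearIndependent_conj_of_sum_abv_lt [DecidableEq (L ≃ₐ[F] L)]
    (v : AbsoluteValue L ℝ) {y : L}
    (hy : ∑ σ ∈ univ.erase (1 : L ≃ₐ[F] L), v (σ y) < v y) :
    LinearIndependent F fun σ : L ≃ₐ[F] L => σ y := by
  rw [Fintype.linearIndependent_iff]
  intro c hc
  set a : (L ≃ₐ[F] L) → ℝ := fun σ => v (algebraMap F L (c σ)) with ha
  obtain ⟨ρ, hρ⟩ := Finite.exists_max a
  have hshift := sum_smul_conj_mul_left_eq_zero hc ρ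
  rw [← add_sum_erase _ _ (mem_univ 1), mul_one, AlgEquiv.one_apply] at hshift
  set S := univ.erase (1 : L ≃ₐ[F] L)
  have hle : a ρ * v y ≤ a ρ * ∑ σ ∈ S, v (σ y) :=
    calc a ρ * v y = v (c ρ • y) := by rw [Algebra.smul_def, v.map_mul]
      _ = v (∑ τ ∈ S, c (ρ * τ) • τ y) := by
          rw [eq_neg_of_add_eq_zero_left hshift, v.map_neg]
      _ ≤ ∑ τ ∈ S, v (c (ρ * τ) • τ y) := v.sum_le _ _
      _ = ∑ τ ∈ S, a (ρ * τ) * v (τ y) := by simp only [Algebra.smul_def, v.map_mul, a]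
      _ ≤ ∑ τ ∈ S, a ρ * v (τ y) := by gcongr with τ; exact hρ _
      _ = a ρ * ∑ τ ∈ S, v (τ y) := (mul_sum _ _ _).symm
  have hρ0 : a ρ = 0 := by
    by_contra h
    exact hy.not_ge (le_of_mul_le_mul_left hle ((v.nonneg _).lt_of_ne' h))
  intro σ
  have : a σ = 0 := le_antisymm (hρ0 ▸ hρ σ) (v.nonneg _)
  rwa [ha, v.eq_zero, FaithfulSMul.algebraMap_eq_zero_iff] at this

theorem isNormalElement_of_linearIndependent [IsGalois F L] {y : L}
    (h : LinearIndependent F fun σ : L ≃ₐ[F] L => σ y) : IsNormalElement F y :=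
  ⟨h.span_eq_top_of_card_eq_finrank
    (by rw [← Nat.card_eq_fintype_card, IsGalois.card_aut_eq_finrank]), h⟩

theorem isNormalElement_of_abv_conj_le [IsGalois F L] (v : AbsoluteValue L ℝ) {y : L}
    (hy : y ≠ 0) {N : ℕ} (hN : finrank F L ≤ N)
    (h : ∀ σ : L ≃ₐ[F] L, σ ≠ 1 → v (σ y) ≤ v y / N) : IsNormalElement F y := by
  classical
  refine isNormalElement_of_linearIndependent (linearIndependent_conj_of_sum_abv_lt v ?_)
  have hcard : #(univ.erase (1 : L ≃ₐ[F] L)) < N := by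
    rw [card_erase_of_mem (mem_univ _), card_univ, ← Nat.card_eq_fintype_card,
      IsGalois.card_aut_eq_finrank]
    have : 0 < finrank F L := finrank_pos
    omega
  have hN0 : (0 : ℝ) < N := by exact_mod_cast (Nat.zero_le _).trans_lt hcard
  calc ∑ σ ∈ univ.erase 1, v (σ y)
      ≤ #(univ.erase (1 : L ≃ₐ[F] L)) • (v y / N) :=
        sum_le_card_nsmul _ _ _ fun σ hσ => h σ (ne_of_mem_erase hσ)
    _ < v y := by
      rw [nsmul_eq_mul, mul_div_assoc', div_lt_iff₀ hN0, mul_comm (v y)]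
      exact mul_lt_mul_of_pos_right (by exact_mod_cast hcard) (v.pos hy)

end Conjugates

theorem pow_completelyNormal_of_abs_lt_general
    {K L : Type*} [Field K] [Field L] [Algebra K L]
    [FiniteDimensional K L] [IsGalois K L]
    (v : AbsoluteValue L ℝ) (x : L) (hx : x ≠ 0)
    (m : ℕ)
    (h2 : ∀ γ : L ≃ₐ[K] L, γ ≠ 1 → v (γ x / x) ^ m ≤ 1 / (Module.finrank K L : ℝ)) :
    IsCompletelyNormal K (x ^ m) := by
  intro F
  refine isNormalElement_of_abv_conj_le v (pow_ne_zero m hx)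
    (finrank_top_le_finrank_of_isScalarTower K F L) fun σ hσ => ?_
  have hσK : σ.restrictScalars K ≠ 1 := fun h => hσ (AlgEquiv.restrictScalars_injective K h)
  calc v (σ (x ^ m)) = v (σ x / x) ^ m * v x ^ m := by
        rw [map_pow, map_div₀, v.map_pow, div_pow,
          div_mul_cancel₀ _ (pow_ne_zero m (v.ne_zero hx))]
    _ ≤ 1 / finrank K L * v x ^ m := by gcongr; exact h2 _ hσK
    _ = v (x ^ m) / finrank K L := by rw [v.map_pow, one_div_mul_eq_div]

theorem pow_completelyNormal_of_abs_lt
    {K L : Type*} [Field K] [Field L] [Algebra K L]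
    [FiniteDimensional K L] [IsGalois K L]
    (hn : 2 ≤ Module.finrank K L)
    (hab : ∀ γ δ : L ≃ₐ[K] L, γ * δ = δ * γ)
    (v : AbsoluteValue L ℝ) (x : L) (hx : x ≠ 0)
    (h1 : ∀ γ : L ≃ₐ[K] L, γ ≠ 1 → v (γ x / x) < 1)
    (m : ℕ) (hm : 0 < m)
    (h2 : ∀ γ : L ≃ₐ[K] L, γ ≠ 1 → v (γ x / x) ^ m ≤ 1 / (Module.finrank K L : ℝ)) :
    IsCompletelyNormal K (x ^ m) :=
  pow_completelyNormal_of_abs_lt_general v x hx m h2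
end
end

section
/- Let L/K be a finite abelian extension of degree n ≥ 2 with Galois group G, and let |·| be a nonarchimedean absolute value on L. If x ∈ L satisfies |x^γ / x| < 1 for all γ ∈ G \ {Id}, then for every positive integer t, the element x^t is completely normal in L/K. -/
/-!
If `v (γ y) < v y` for every nontrivial automorphism `γ`, apply `δ₀⁻¹` to a relation
`∑ c_δ δ(y) = 0`, where `δ₀` maximises `v (c_δ)`: the term `c_δ₀ y` strictly dominates the
others, which the ultrametric inequality forbids unless every `c_δ` vanishes. So the conjugates
of `y` are linearly independent, hence a basis by counting in a Galois extension. The hypothesis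
on `x` gives `v (γ x) < v x` for automorphisms over every intermediate field, and this passes to
`x ^ t`.
-/

noncomputable section

section

variable {F L : Type*} [Field F] [Field L] [Algebra F L] {v : AbsoluteValue L ℝ}

theorem linearIndependent_algEquiv_apply_of_apply_lt (hna : IsNonarchimedean v) {y : L}
    (hy : y ≠ 0) (h : ∀ γ : L ≃ₐ[F] L, γ ≠ 1 → v (γ y) < v y) :
    LinearIndependent F fun γ : L ≃ₐ[F] L => γ y := by
  classical
  rw [linearIndependent_iff']
  intro s c hsum
  by_contra! hne
  obtain ⟨i, his, hci⟩ := hne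
  obtain ⟨δ, hδs, hδmax⟩ :=
    s.exists_max_image (fun γ => v (algebraMap F L (c γ))) ⟨i, his⟩
  set l : (L ≃ₐ[F] L) → L := fun γ => algebraMap F L (c γ) * (δ⁻¹ * γ) y
  have hl_sum : ∑ γ ∈ s, l γ = 0 := by
    simpa [l, Algebra.smul_def] using congrArg δ.symm hsum
  have hcδ : 0 < v (algebraMap F L (c δ)) :=
    (v.pos (by simpa using hci)).trans_le (hδmax i his)
  have hl_dom : ∀ γ ∈ s, γ ≠ δ → v (l γ) < v (l δ) := by
    intro γ hγ hγδ
    have hne_one : δ⁻¹ * γ ≠ 1 := fun h1 => hγδ (inv_mul_eq_one.mp h1).symm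
    simp only [l, map_mul, inv_mul_cancel, AlgEquiv.one_apply]
    calc v (algebraMap F L (c γ)) * v ((δ⁻¹ * γ) y)
        ≤ v (algebraMap F L (c δ)) * v ((δ⁻¹ * γ) y) :=
          mul_le_mul_of_nonneg_right (hδmax γ hγ) (v.nonneg _)
      _ < v (algebraMap F L (c δ)) * v y := mul_lt_mul_of_pos_left (h _ hne_one) hcδ
  have hlδ := hna.apply_sum_eq_of_lt (fun a => (v.map_neg a).symm) hδs hl_dom
  rw [hl_sum, v.map_zero, eq_comm, v.eq_zero] at hlδ
  simp only [l, inv_mul_cancel, AlgEquiv.one_apply, mul_eq_zero, hy, or_false] at hlδ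
  exact hcδ.ne' (by rw [hlδ, v.map_zero])

theorem isNormalElement_of_apply_lt [FiniteDimensional F L] [IsGalois F L]
    (hna : IsNonarchimedean v) {y : L} (hy : y ≠ 0)
    (h : ∀ γ : L ≃ₐ[F] L, γ ≠ 1 → v (γ y) < v y) :
    IsNormalElement F y :=
  have hli := linearIndependent_algEquiv_apply_of_apply_lt hna hy h
  ⟨hli.span_eq_top_of_card_eq_finrank
    (by rw [← Nat.card_eq_fintype_card, IsGalois.card_aut_eq_finrank]), hli⟩

end

theorem pow_completelyNormal_of_nonarch_general
    {K L : Type*} [Field K] [Field L] [Algebra K L]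
    [FiniteDimensional K L] [IsGalois K L]
    (v : AbsoluteValue L ℝ)
    (hna : ∀ a b : L, v (a + b) ≤ max (v a) (v b))
    (x : L) (hx : x ≠ 0)
    (h1 : ∀ γ : L ≃ₐ[K] L, γ ≠ 1 → v (γ x / x) < 1) :
    ∀ t : ℕ, 0 < t → IsCompletelyNormal K (x ^ t) := by
  intro t ht F
  refine isNormalElement_of_apply_lt hna (pow_ne_zero t hx) fun γ hγ => ?_
  have hγK : γ.restrictScalars K ≠ 1 :=
    fun h => hγ (AlgEquiv.restrictScalars_injective K h)
  have hlt : v (γ x) < v x := by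
    simpa [div_lt_one (v.pos hx)] using h1 _ hγK
  simpa only [map_pow] using pow_lt_pow_left₀ hlt (v.nonneg _) ht.ne'

theorem pow_completelyNormal_of_nonarch
    {K L : Type*} [Field K] [Field L] [Algebra K L]
    [FiniteDimensional K L] [IsGalois K L]
    (hn : 2 ≤ Module.finrank K L)
    (hab : ∀ γ δ : L ≃ₐ[K] L, γ * δ = δ * γ)
    (v : AbsoluteValue L ℝ)
    (hna : ∀ a b : L, v (a + b) ≤ max (v a) (v b))
    (x : L) (hx : x ≠ 0)
    (h1 : ∀ γ : L ≃ₐ[K] L, γ ≠ 1 → v (γ x / x) < 1) :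
    ∀ t : ℕ, 0 < t → IsCompletelyNormal K (x ^ t) :=
  pow_completelyNormal_of_nonarch_general v hna x hx h1
end
end

section
/- Let L/K be an abelian extension of number fields with Galois group G, and let x ∈ L be an algebraic integer such that L = K(x) and all conjugates x^γ (γ ∈ G) are real (under a fixed embedding of L into ℂ). Let a, b be nonzero integers with |a/b| > 2. Then the complex absolute values |a x^γ + b| for γ ∈ G are pairwise distinct. -/
/-!
For real `r` and `s`, `|a r + b| = |a s + b|` forces `r = s` or `a (r + s) = -2b`. Distinct
automorphisms move the generator `x` to distinct conjugates, so only the second case can occur;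
but then `-2b/a` is a rational algebraic integer, hence an integer, so `a ∣ 2b`, which is
impossible when `0 < 2|b| < |a|`.
-/

theorem AlgHom.ext_of_intermediateFieldAdjoin_eq_top {K L M : Type*} [Field K] [Field L] [Field M]
    [Algebra K L] [Algebra K M] {s : Set L} (h : IntermediateField.adjoin K s = ⊤)
    ⦃φ ψ : L →ₐ[K] M⦄ (hs : Set.EqOn φ ψ s) : φ = ψ := by
  have hadj := IntermediateField.adjoin_algHom_ext K
    (φ₁ := φ.comp (IntermediateField.adjoin K s).val)
    (φ₂ := ψ.comp (IntermediateField.adjoin K s).val) fun _ hx ↦ hs hx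
  ext y
  exact congr($hadj ⟨y, h ▸ IntermediateField.mem_top⟩)

theorem Int.dvd_of_isIntegral_of_mul_eq {A : Type*} [Field A] [CharZero A] {a c : ℤ} {y : A}
    (ha : a ≠ 0) (hy : IsIntegral ℤ y) (h : (a : A) * y = c) : a ∣ c := by
  have hy' : algebraMap ℚ A (c / a) = y := by
    rw [map_div₀, map_intCast, map_intCast, ← h, mul_div_cancel_left₀ _ (by exact_mod_cast ha)]
  obtain ⟨z, hz⟩ := IsIntegrallyClosed.isIntegral_iff.mp <|
    (isIntegral_algebraMap_iff (algebraMap ℚ A).injective).mp (hy' ▸ hy)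
  refine ⟨z, ?_⟩
  rw [eq_intCast, eq_div_iff (by exact_mod_cast ha)] at hz
  exact_mod_cast hz.symm.trans (mul_comm _ _)

theorem Complex.eq_or_mul_add_eq_of_norm_mul_add_eq {z w : ℂ} (hz : z.im = 0) (hw : w.im = 0)
    {a b : ℝ} (ha : a ≠ 0) (h : ‖(a : ℂ) * z + b‖ = ‖(a : ℂ) * w + b‖) :
    z = w ∨ (a : ℂ) * (z + w) = -2 * b := by
  lift z to ℝ using hz
  lift w to ℝ using hw
  norm_cast at h
  rw [Real.norm_eq_abs, Real.norm_eq_abs, abs_eq_abs] at h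
  refine h.imp (fun h ↦ congrArg _ (mul_left_cancel₀ ha (by linarith))) (fun h ↦ ?_)
  exact_mod_cast (show a * (z + w) = -2 * b by linarith)

theorem abs_values_pairwise_distinct_general
    {K L : Type*} [Field K] [Field L]
    [Algebra K L]
    (ι : L →+* ℂ)
    (x : L) (hint : IsIntegral ℤ x)
    (hgen : IntermediateField.adjoin K {x} = ⊤)
    (hreal : ∀ γ : L ≃ₐ[K] L, (ι (γ x)).im = 0)
    (a b : ℤ) (hb : b ≠ 0) (habs : 2 * |b| < |a|) :
    ∀ γ δ : L ≃ₐ[K] L, γ ≠ δ →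
      ‖(a : ℂ) * ι (γ x) + (b : ℂ)‖ ≠
        ‖(a : ℂ) * ι (δ x) + (b : ℂ)‖ := by
  intro γ δ hne heq
  have ha : a ≠ 0 := abs_pos.mp ((mul_nonneg zero_le_two (abs_nonneg b)).trans_lt habs)
  have hconj (σ : L ≃ₐ[K] L) : IsIntegral ℤ (ι (σ x)) :=
    (hint.map ((σ : L →ₐ[K] L).restrictScalars ℤ)).map ι.toIntAlgHom
  obtain heq | hsum := Complex.eq_or_mul_add_eq_of_norm_mul_add_eq (hreal γ) (hreal δ)
    (Int.cast_ne_zero.mpr ha) (by push_cast; exact heq)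
  · refine hne (AlgEquiv.coe_toAlgHom_injective ?_)
    refine AlgHom.ext_of_intermediateFieldAdjoin_eq_top hgen ?_
    simpa using ι.injective heq
  · have hdvd : a ∣ -2 * b :=
      Int.dvd_of_isIntegral_of_mul_eq ha ((hconj γ).add (hconj δ)) (by push_cast; exact hsum)
    have h2b : |-2 * b| < |a| := by rwa [abs_mul, abs_neg, abs_two]
    exact mul_ne_zero (by norm_num) hb (Int.eq_zero_of_abs_lt_dvd ((abs_dvd _ _).mpr hdvd) h2b)

theorem abs_values_pairwise_distinct
    {K L : Type*} [Field K] [NumberField K] [Field L] [NumberField L]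
    [Algebra K L] [IsGalois K L]
    (hab : ∀ γ δ : L ≃ₐ[K] L, γ * δ = δ * γ)
    (ι : L →+* ℂ)
    (x : L) (hint : IsIntegral ℤ x)
    (hgen : IntermediateField.adjoin K {x} = ⊤)
    (hreal : ∀ γ : L ≃ₐ[K] L, (ι (γ x)).im = 0)
    (a b : ℤ) (ha : a ≠ 0) (hb : b ≠ 0) (habs : 2 * |b| < |a|) :
    ∀ γ δ : L ≃ₐ[K] L, γ ≠ δ →
      ‖(a : ℂ) * ι (γ x) + (b : ℂ)‖ ≠
        ‖(a : ℂ) * ι (δ x) + (b : ℂ)‖ :=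
  abs_values_pairwise_distinct_general ι x hint hgen hreal a b hb habs
end

section
/- Let ℓ be a positive integer not in {1,2,3,4,6}. For every integer t with gcd(t, ℓ) = 1 and 1 < t ≤ ⌊ℓ/2⌋, one has 0 < (cos(2tπ/ℓ) + 1)/(cos(2π/ℓ) + 1) ≤ (cos(4π/ℓ) + 1)/(cos(2π/ℓ) + 1) < 1. -/
/-! On `[0, π]` the cosine is strictly decreasing and equals `-1` only at `π`. Coprimality with
`ℓ` rules out `t = ℓ / 2`, so `2π/ℓ < 4π/ℓ ≤ 2tπ/ℓ < π`, and the three bounds follow by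
monotonicity of `cos x + 1`, which is positive on `[0, π)`. -/

open Real

lemma Real.cos_add_one_pos {x : ℝ} (hx₀ : 0 ≤ x) (hxπ : x < π) : 0 < cos x + 1 := by
  have := cos_lt_cos_of_nonneg_of_le_pi hx₀ le_rfl hxπ
  rw [cos_pi] at this
  linarith

lemma Real.cos_add_one_div_bounds {a b c : ℝ} (ha : 0 ≤ a) (hab : a < b) (hbc : b ≤ c)
    (hcπ : c < π) :
    0 < (cos c + 1) / (cos a + 1) ∧
    (cos c + 1) / (cos a + 1) ≤ (cos b + 1) / (cos a + 1) ∧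
    (cos b + 1) / (cos a + 1) < 1 := by
  have hb : 0 ≤ b := ha.trans hab.le
  have hcb : cos c ≤ cos b := cos_le_cos_of_nonneg_of_le_pi hb hcπ.le hbc
  have hba : cos b < cos a := cos_lt_cos_of_nonneg_of_le_pi ha (hbc.trans hcπ.le) hab
  have hnum : 0 < cos c + 1 := cos_add_one_pos (hb.trans hbc) hcπ
  have hden : 0 < cos a + 1 := by linarith
  refine ⟨div_pos hnum hden, by gcongr, ?_⟩
  rw [div_lt_one hden]
  linarith

lemma Nat.two_mul_lt_of_coprime {t n : ℕ} (hcop : Nat.Coprime t n) (ht : 1 < t)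
    (htn : t ≤ n / 2) : 2 * t < n := by
  refine lt_of_le_of_ne (by omega) fun h ↦ ?_
  have : Nat.gcd t n = t := Nat.gcd_eq_left ⟨2, by omega⟩
  rw [hcop] at this
  omega

theorem cos_quotient_bounds_general
    (ℓ : ℕ)
    (t : ℕ) (hgcd : Nat.gcd t ℓ = 1) (ht1 : 1 < t) (ht2 : t ≤ ℓ / 2) :
    0 < (Real.cos (2 * t * π / ℓ) + 1) / (Real.cos (2 * π / ℓ) + 1) ∧
    (Real.cos (2 * t * π / ℓ) + 1) / (Real.cos (2 * π / ℓ) + 1) ≤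
      (Real.cos (4 * π / ℓ) + 1) / (Real.cos (2 * π / ℓ) + 1) ∧
    (Real.cos (4 * π / ℓ) + 1) / (Real.cos (2 * π / ℓ) + 1) < 1 := by
  have h2t : (2 * t : ℝ) < ℓ := by exact_mod_cast Nat.two_mul_lt_of_coprime hgcd ht1 ht2
  have ht : (2 : ℝ) ≤ t := by exact_mod_cast ht1
  have hℓ : (0 : ℝ) < ℓ := by linarith
  apply cos_add_one_div_bounds (by positivity)
  · gcongr; norm_num
  · gcongr; linarith
  · rw [div_lt_iff₀ hℓ]
    nlinarith [pi_pos]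

theorem cos_quotient_bounds
    (ℓ : ℕ) (hℓ : 0 < ℓ) (hℓ' : ℓ ∉ ({1, 2, 3, 4, 6} : Set ℕ))
    (t : ℕ) (hgcd : Nat.gcd t ℓ = 1) (ht1 : 1 < t) (ht2 : t ≤ ℓ / 2) :
    0 < (Real.cos (2 * t * π / ℓ) + 1) / (Real.cos (2 * π / ℓ) + 1) ∧
    (Real.cos (2 * t * π / ℓ) + 1) / (Real.cos (2 * π / ℓ) + 1) ≤
      (Real.cos (4 * π / ℓ) + 1) / (Real.cos (2 * π / ℓ) + 1) ∧
    (Real.cos (4 * π / ℓ) + 1) / (Real.cos (2 * π / ℓ) + 1) < 1 :=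
  cos_quotient_bounds_general ℓ t hgcd ht1 ht2
end

section
/- Let L₁ and L₂ be finite Galois extensions of a number field K with L₁ ∩ L₂ = K. If x₁ ∈ L₁ is normal in L₁/K and x₂ ∈ L₂ is normal in L₂/K, then x₁x₂ is normal in the compositum L₁L₂ over K. -/
/-!
Since `L₁ ∩ L₂ = K`, restriction `Gal(L₁L₂/K) → Gal(L₁/K) × Gal(L₂/K)` is surjective, so the
conjugates of `x₁x₂` are exactly the products `σ(x₁)τ(x₂)`. These span `L₁ · L₂ = L₁L₂`, and a
spanning family indexed by `Gal(L₁L₂/K)`, of size `[L₁L₂ : K]`, is a basis.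
-/

noncomputable section

open IntermediateField Pointwise

namespace IsNormalElement

variable {K L L' : Type*} [Field K] [Field L] [Field L'] [Algebra K L] [Algebra K L']

theorem of_span_eq_top [FiniteDimensional K L] [IsGalois K L] {x : L}
    (h : Submodule.span K (Set.range fun γ : Gal(L/K) => γ x) = ⊤) : IsNormalElement K x := by
  classical
  exact ⟨h, linearIndependent_of_top_le_span_of_card_eq_finrank h.ge <| by
    rw [← Nat.card_eq_fintype_card, IsGalois.card_aut_eq_finrank]⟩

theorem map {x : L} (h : IsNormalElement K x) (e : L ≃ₐ[K] L') : IsNormalElement K (e x) := by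
  have hconj : (fun γ : Gal(L'/K) => γ (e x)) ∘ AlgEquiv.autCongr e =
      e ∘ fun γ : Gal(L/K) => γ x := by
    ext γ
    exact congrArg (e ∘ γ) (e.symm_apply_apply x)
  refine ⟨?_, ?_⟩
  · rw [← (AlgEquiv.autCongr e).surjective.range_comp, hconj, Set.range_comp]
    calc Submodule.span K (e '' Set.range fun γ : Gal(L/K) => γ x)
        = (Submodule.span K (Set.range fun γ : Gal(L/K) => γ x)).map e.toLinearMap :=
          Submodule.span_image e.toLinearMap
      _ = ⊤ := by
        rw [h.1, Submodule.map_top, LinearMap.range_eq_top]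
        exact e.surjective
  · rw [← linearIndependent_equiv (AlgEquiv.autCongr e).toEquiv]
    exact hconj ▸ h.2.map' e.toLinearMap (LinearMap.ker_eq_bot.mpr e.injective)

end IsNormalElement

section

variable {F E : Type*} [Field F] [Field E] [Algebra F E]

theorem IntermediateField.exists_restrictNormalHom_eq_of_inf_eq_bot [FiniteDimensional F E]
    [IsGalois F E] {K₁ K₂ : IntermediateField F E} [Normal F K₁] [Normal F K₂] (h : K₁ ⊓ K₂ = ⊥)
    (σ : Gal(K₁/F)) (τ : Gal(K₂/F)) :
    ∃ γ : Gal(E/F), AlgEquiv.restrictNormalHom K₁ γ = σ ∧ AlgEquiv.restrictNormalHom K₂ γ = τ := by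
  obtain ⟨γ, rfl⟩ := AlgEquiv.restrictNormalHom_surjective E τ
  -- Disjointness lets an automorphism fixing `K₂` act on `K₁` in any prescribed way.
  obtain ⟨φ, hφ⟩ := restrictRestrictAlgEquivMapHom_surjective K₁ K₂ h
    (σ * (AlgEquiv.restrictNormalHom K₁ γ)⁻¹)
  have hφ₂ : AlgEquiv.restrictNormalHom K₂ (φ.restrictScalars F) = 1 := by
    ext x
    simpa [AlgEquiv.restrictNormalHom_apply] using φ.commutes x
  have hφ₁ : AlgEquiv.restrictNormalHom K₁ (φ.restrictScalars F) =
      σ * (AlgEquiv.restrictNormalHom K₁ γ)⁻¹ := hφ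
  exact ⟨φ.restrictScalars F * γ, by rw [map_mul, hφ₁, inv_mul_cancel_right],
    by rw [map_mul, hφ₂, one_mul]⟩

theorem IsNormalElement.span_range_coe_eq_toSubmodule {K : IntermediateField F E} {x : K}
    (h : IsNormalElement F x) :
    Submodule.span F (Set.range fun σ : Gal(K/F) => (σ x : E)) =
      Subalgebra.toSubmodule K.toSubalgebra := by
  have := congrArg (Submodule.map K.val.toLinearMap) h.1
  rw [Submodule.map_span, ← Set.range_comp, Submodule.map_top] at this
  exact this.trans (by ext; simp)

theorem IsNormalElement.mul_of_inf_eq_bot_of_sup_eq_top [FiniteDimensional F E] [IsGalois F E]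
    {K₁ K₂ : IntermediateField F E} [Normal F K₁] [Normal F K₂] (hinf : K₁ ⊓ K₂ = ⊥) (hsup : K₁ ⊔ K₂ = ⊤)
    {x₁ : K₁} {x₂ : K₂} (h₁ : IsNormalElement F x₁) (h₂ : IsNormalElement F x₂) :
    IsNormalElement F ((x₁ : E) * x₂) := by
  refine of_span_eq_top ?_
  have hconj : (Set.range fun γ : Gal(E/F) => γ (x₁ * x₂)) =
      (Set.range fun σ : Gal(K₁/F) => (σ x₁ : E)) * Set.range fun τ : Gal(K₂/F) => (τ x₂ : E) := by
    ext y
    constructor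
    · rintro ⟨γ, rfl⟩
      exact ⟨_, ⟨AlgEquiv.restrictNormalHom K₁ γ, rfl⟩, _,
        ⟨AlgEquiv.restrictNormalHom K₂ γ, rfl⟩, by simp [AlgEquiv.restrictNormalHom_apply]⟩
    · rintro ⟨_, ⟨σ, rfl⟩, _, ⟨τ, rfl⟩, rfl⟩
      obtain ⟨γ, rfl, rfl⟩ := exists_restrictNormalHom_eq_of_inf_eq_bot hinf σ τ
      exact ⟨γ, by simp [AlgEquiv.restrictNormalHom_apply]⟩
  rw [hconj, ← Submodule.span_mul_span, h₁.span_range_coe_eq_toSubmodule,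
    h₂.span_range_coe_eq_toSubmodule, Subalgebra.mul_toSubmodule, ← sup_toSubalgebra_of_left,
    hsup, top_toSubalgebra, Algebra.top_toSubmodule]

end

theorem mul_isNormalElement_sup_general
    {K L : Type*} [Field K] [Field L] [Algebra K L]
    (L₁ L₂ : IntermediateField K L)
    [FiniteDimensional K L₁] [FiniteDimensional K L₂]
    [IsGalois K L₁] [IsGalois K L₂]
    (hdisj : L₁ ⊓ L₂ = ⊥)
    (x₁ x₂ : L) (hx₁ : x₁ ∈ L₁) (hx₂ : x₂ ∈ L₂)
    (h₁ : IsNormalElement K (⟨x₁, hx₁⟩ : L₁))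
    (h₂ : IsNormalElement K (⟨x₂, hx₂⟩ : L₂)) :
    ∃ y : ↥(L₁ ⊔ L₂), (y : L) = x₁ * x₂ ∧ IsNormalElement K y := by
  let K₁ := restrict (le_sup_left : L₁ ≤ L₁ ⊔ L₂)
  let K₂ := restrict (le_sup_right : L₂ ≤ L₁ ⊔ L₂)
  have : Normal K K₁ := Normal.of_algEquiv (restrictAlgEquiv _)
  have : Normal K K₂ := Normal.of_algEquiv (restrictAlgEquiv _)
  have hinf : K₁ ⊓ K₂ = ⊥ := by
    rw [← lift_inj, lift_bot, lift_inf, lift_restrict, lift_restrict, hdisj]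
  have hsup : K₁ ⊔ K₂ = ⊤ := by
    rw [← lift_inj, lift_top, lift_sup, lift_restrict, lift_restrict]
  exact ⟨_, rfl, (h₁.map (restrictAlgEquiv _)).mul_of_inf_eq_bot_of_sup_eq_top hinf hsup
    (h₂.map (restrictAlgEquiv _))⟩

theorem mul_isNormalElement_sup
    {K L : Type*} [Field K] [NumberField K] [Field L] [Algebra K L]
    (L₁ L₂ : IntermediateField K L)
    [FiniteDimensional K L₁] [FiniteDimensional K L₂]
    [IsGalois K L₁] [IsGalois K L₂]
    (hdisj : L₁ ⊓ L₂ = ⊥)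
    (x₁ x₂ : L) (hx₁ : x₁ ∈ L₁) (hx₂ : x₂ ∈ L₂)
    (h₁ : IsNormalElement K (⟨x₁, hx₁⟩ : L₁))
    (h₂ : IsNormalElement K (⟨x₂, hx₂⟩ : L₂)) :
    ∃ y : ↥(L₁ ⊔ L₂), (y : L) = x₁ * x₂ ∧ IsNormalElement K y :=
  mul_isNormalElement_sup_general L₁ L₂ hdisj x₁ x₂ hx₁ hx₂ h₁ h₂
end
end
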